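/- arXiv:2106.11289 — 2 statements merged into one kernel-verified Lean document; each statement's English description precedes it below -/
import Mathlib

section
/- Let U be a K-vector subspace of Kⁿ. Then for every coset b ∈ Kⁿ/U, the set {v(w) : w ∈ b} ⊆ Γ has a minimum. -/
noncomputable section

open scoped Classical Pointwise

section Preamble

variable {K : Type*} [Field K] {Γ : Type*} [LinearOrderedCommGroupWithZero Γ]

instance (priority := 100) : OrderBot Γ where
  bot := 0
  bot_le _ := zero_le'

/-- The max-valuation on `K^n`: `v(a) = maxᵢ v(aᵢ)`. -/
def vv (v : Valuation K Γ) {n : ℕ} (x : Fin n → K) : Γ :=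
  Finset.univ.sup fun i => v (x i)

/-- `rvEq v x y` expresses `rv(x) = rv(y)` in `RV⁽ⁿ⁾ = Kⁿ/∼`, where
`x ∼ y` iff `v(x−y) < v(x)` or `x = y = 0`. -/
def rvEq (v : Valuation K Γ) {n : ℕ} (x y : Fin n → K) : Prop :=
  vv v (x - y) < vv v x ∨ (x = 0 ∧ y = 0)

/-- Balls in `K` (with `K` itself counting as a ball). -/
def IsBall1 (v : Valuation K Γ) (B : Set K) : Prop :=
  B = Set.univ ∨ ∃ a : K, ∃ γ : Γ, γ ≠ 0 ∧
    (B = {x | v (x - a) < γ} ∨ B = {x | v (x - a) ≤ γ})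

/-- Balls in `Kⁿ` (with `Kⁿ` itself counting as a ball). -/
def IsBall (v : Valuation K Γ) {n : ℕ} (B : Set (Fin n → K)) : Prop :=
  B = Set.univ ∨ ∃ a : Fin n → K, ∃ γ : Γ, γ ≠ 0 ∧
    (B = {x | vv v (x - a) < γ} ∨ B = {x | vv v (x - a) ≤ γ})

/-- Spherical completeness: every nonempty chain of balls in `K` has nonempty
intersection. -/
def SphericallyComplete (v : Valuation K Γ) : Prop :=
  ∀ C : Set (Set K), C.Nonempty → (∀ B ∈ C, IsBall1 v B) → IsChain (· ⊆ ·) C →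
    (⋂ B ∈ C, B).Nonempty

/-- The residue field `K̄` of the valuation ring `𝒪 = {x | v x ≤ 1}`. -/
def Kbar (v : Valuation K Γ) : Type _ :=
  IsLocalRing.ResidueField v.valuationSubring

instance (v : Valuation K Γ) : Field (Kbar v) :=
  inferInstanceAs (Field (IsLocalRing.ResidueField v.valuationSubring))

/-- The residue map `res : 𝒪 → K̄`, extended by the junk value `0` outside `𝒪`. -/
def res' (v : Valuation K Γ) (x : K) : Kbar v :=
  if h : v x ≤ 1 then IsLocalRing.residue v.valuationSubring ⟨x, h⟩ else 0

/-- The coordinatewise residue map on `Kⁿ`. -/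
def resv (v : Valuation K Γ) {n : ℕ} (x : Fin n → K) : Fin n → Kbar v :=
  fun i => res' v (x i)

/-- `res(S)` for a set `S ⊆ Kⁿ`: the set of residues of points of `S ∩ 𝒪ⁿ`. -/
def resSet (v : Valuation K Γ) {n : ℕ} (S : Set (Fin n → K)) : Set (Fin n → Kbar v) :=
  resv v '' {x ∈ S | ∀ i, v (x i) ≤ 1}

/-- `dir(x) = res(K·x) ⊆ K̄ⁿ`. -/
def dirSet (v : Valuation K Γ) {n : ℕ} (x : Fin n → K) : Set (Fin n → Kbar v) :=
  resSet v {y | ∃ c : K, y = c • x}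

/-- The coordinate projection `Kⁿ → K^d` selecting the coordinates `σ 0 < σ 1 < ⋯`. -/
def proj {A : Type*} {n d : ℕ} (σ : Fin d → Fin n) (x : Fin n → A) : Fin d → A :=
  fun k => x (σ k)

/-- `σ` (a strictly increasing selection of `d` of the `n` coordinates) is an
exhibition of the `K̄`-subspace `Ū ⊆ K̄ⁿ` if the corresponding coordinate projection
`K̄ⁿ → K̄^d` restricts to an isomorphism from `Ū` onto `K̄^d`. -/
def IsExhibition (v : Valuation K Γ) {n d : ℕ} (σ : Fin d → Fin n)
    (Ubar : Submodule (Kbar v) (Fin n → Kbar v)) : Prop :=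
  StrictMono σ ∧ Set.BijOn (proj σ) (Ubar : Set (Fin n → Kbar v)) Set.univ

/-- `affdir(C)`: the `K̄`-subspace of `K̄ⁿ` generated by all `dir(x − x')`, `x, x' ∈ C`. -/
def affdir (v : Valuation K Γ) {n : ℕ} (C : Set (Fin n → K)) :
    Submodule (Kbar v) (Fin n → Kbar v) :=
  Submodule.span (Kbar v) (⋃ x ∈ C, ⋃ x' ∈ C, dirSet v (x - x'))

/-- A matrix has entries in the valuation ring `𝒪`. -/
def EntriesInO (v : Valuation K Γ) {n : ℕ} (M : Matrix (Fin n) (Fin n) K) : Prop :=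
  ∀ i j, v (M i j) ≤ 1

/-- `M ∈ GLₙ(𝒪)`: `M` is invertible, with entries in `𝒪`, and its inverse also has
entries in `𝒪`. -/
def MemGLO (v : Valuation K Γ) {n : ℕ} (M : Matrix (Fin n) (Fin n) K) : Prop :=
  EntriesInO v M ∧ ∃ N : Matrix (Fin n) (Fin n) K,
    M * N = 1 ∧ N * M = 1 ∧ EntriesInO v N

/-- The entrywise residue matrix of `M`. -/
def resM (v : Valuation K Γ) {n : ℕ} (M : Matrix (Fin n) (Fin n) K) :
    Matrix (Fin n) (Fin n) (Kbar v) :=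
  fun i j => res' v (M i j)

/-- `DeltaLE v U W γ` expresses `Δ(U, W) ≤ γ`: for every `u ∈ U` there is `w ∈ W`
with `v(u − w) ≤ v(u)·γ`. -/
def DeltaLE (v : Valuation K Γ) {n : ℕ} (U W : Submodule K (Fin n → K)) (γ : Γ) : Prop :=
  ∀ u ∈ U, ∃ w ∈ W, vv v (u - w) ≤ vv v u * γ

/-- `IsDelta v U W γ` expresses `Δ(U, W) = γ`: `γ` is the minimum of all admissible
bounds. -/
def IsDelta (v : Valuation K Γ) {n : ℕ} (U W : Submodule K (Fin n → K)) (γ : Γ) : Prop :=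
  DeltaLE v U W γ ∧ ∀ δ : Γ, DeltaLE v U W δ → γ ≤ δ

end Preamble

variable {K : Type*} [Field K] {Γ : Type*} [LinearOrderedCommGroupWithZero Γ]

/-! Elimination along a pivot: if `u ∈ U` has `u j = 1` and all entries in `𝒪`, then subtracting
`w j • u` clears the `j`-th coordinate of `w` without raising `v(w)`. So the minimum over `x + U`
is the minimum over the coset of `U ∩ {z | z j = 0}` through `x - x j • u`, a subspace of smaller
dimension, and induction on `dim U` applies. -/

section

variable (v : Valuation K Γ) {n : ℕ}

lemma vv_le_iff {x : Fin n → K} {γ : Γ} : vv v x ≤ γ ↔ ∀ i, v (x i) ≤ γ := by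
  simp [vv, Finset.sup_le_iff]

lemma le_vv (x : Fin n → K) (i : Fin n) : v (x i) ≤ vv v x :=
  (vv_le_iff v).1 le_rfl i

lemma vv_sub_smul_le {u w : Fin n → K} {c : K} (hu : ∀ i, v (u i) ≤ 1) (hc : v c ≤ vv v w) :
    vv v (w - c • u) ≤ vv v w := by
  refine (vv_le_iff v).2 fun i => (v.map_sub _ _).trans (max_le (le_vv v w i) ?_)
  calc v (c * u i) = v c * v (u i) := v.map_mul _ _
    _ ≤ v c * 1 := mul_le_mul_right (hu i) _
    _ ≤ vv v w := by rwa [mul_one]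

lemma exists_pivot_mem {U : Submodule K (Fin n → K)} (hU : U ≠ ⊥) :
    ∃ u ∈ U, ∃ j, u j = 1 ∧ ∀ i, v (u i) ≤ 1 := by
  obtain ⟨u, huU, hu⟩ := Submodule.exists_mem_ne_zero_of_ne_bot hU
  obtain ⟨i₀, hi₀⟩ := Function.ne_iff.1 hu
  obtain ⟨j, -, hmax⟩ :=
    Finset.exists_max_image Finset.univ (fun i => v (u i)) ⟨i₀, Finset.mem_univ i₀⟩
  replace hmax : ∀ i, v (u i) ≤ v (u j) := fun i => hmax i (Finset.mem_univ i)
  have huj : u j ≠ 0 := fun h => hi₀ (by simpa [h] using hmax i₀)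
  refine ⟨(u j)⁻¹ • u, U.smul_mem _ huU, j, inv_mul_cancel₀ huj, fun i => ?_⟩
  rw [Pi.smul_apply, smul_eq_mul, map_mul, map_inv₀]
  exact inv_mul_le_one_of_le₀ (hmax i) zero_le

lemma isMin_vv_of_pivot {U : Submodule K (Fin n → K)} {u x w₀ : Fin n → K} {j : Fin n}
    (huU : u ∈ U) (huj : u j = 1) (hu : ∀ i, v (u i) ≤ 1)
    (hw₀ : w₀ - (x - x j • u) ∈ U ⊓ LinearMap.ker (LinearMap.proj j))
    (hmin : ∀ w, w - (x - x j • u) ∈ U ⊓ LinearMap.ker (LinearMap.proj j) → vv v w₀ ≤ vv v w) :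
    w₀ - x ∈ U ∧ ∀ w : Fin n → K, w - x ∈ U → vv v w₀ ≤ vv v w := by
  refine ⟨?_, fun w hw => ?_⟩
  · have : w₀ - x = (w₀ - (x - x j • u)) - x j • u := by abel
    rw [this]
    exact U.sub_mem hw₀.1 (U.smul_mem _ huU)
  refine (hmin (w - w j • u) ⟨?_, ?_⟩).trans (vv_sub_smul_le v hu (le_vv v w j))
  · have : w - w j • u - (x - x j • u) = (w - x) - (w j - x j) • u := by
      rw [sub_smul]; abel
    rw [this]
    exact U.sub_mem hw (U.smul_mem _ huU)
  · simp [huj]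

end

/-- for any subspace `U ⊆ Kⁿ` and any coset `x + U`, the set of
valuations of its elements has a minimum. -/
theorem coset_valuation_has_minimum
    (v : Valuation K Γ) {n : ℕ} (U : Submodule K (Fin n → K))
    (x : Fin n → K) :
    ∃ w₀ : Fin n → K, w₀ - x ∈ U ∧
      ∀ w : Fin n → K, w - x ∈ U → vv v w₀ ≤ vv v w := by
  induction hd : Module.finrank K U using Nat.strong_induction_on generalizing U x with
  | _ d ih =>
  by_cases hU : U = ⊥
  · subst hU
    exact ⟨x, by simp, fun w hw => by rw [sub_eq_zero.1 hw]⟩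
  obtain ⟨u, huU, j, huj, hu⟩ := exists_pivot_mem v hU
  set U₀ := U ⊓ LinearMap.ker (LinearMap.proj j)
  have hlt : U₀ < U := lt_of_le_of_ne inf_le_left fun h => by
    have : u ∈ U₀ := h ▸ huU
    simp [U₀, huj] at this
  obtain ⟨w₀, hw₀, hmin⟩ :=
    ih _ (hd ▸ Submodule.finrank_lt_finrank_of_lt hlt) U₀ (x - x j • u) rfl
  exact ⟨w₀, isMin_vv_of_pivot v huU huj hu hw₀ hmin⟩

end
end

section
/- Let {e₁,…,eₙ} be the standard basis of Kⁿ and let W ⊆ Kⁿ be a d-dimensional K-subspace such that res(W) = span_{K̄}(ē₁,…,ē_d), where ē_k = res(e_k). Then W has a basis (w_k)_{1 ≤ k ≤ d} with w_k ∈ e_k + ({0}^d × 𝔪^{n−d}) for each k. -/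
/-!
Lift each residue vector `ēₖ` to some `uₖ ∈ W ∩ 𝒪ⁿ`. The `d × d` block of the `uₖ` in the first
`d` coordinates has residue the identity, so it lies in `GL_d(𝒪)`; multiplying the rows `uₖ` by its
inverse yields vectors of `W` that are `eₖ` in the first `d` coordinates and still have all other
coordinates in `𝔪`. They are visibly independent, hence span the `d`-dimensional `W`.
-/

noncomputable section

open scoped Classical Pointwise

variable {K : Type*} [Field K] {Γ : Type*} [LinearOrderedCommGroupWithZero Γ]

theorem Matrix.isUnit_of_isUnit_mapMatrix {R S : Type*} [CommRing R] [CommRing S]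
    {ι : Type*} [Fintype ι] [DecidableEq ι] (f : R →+* S) [IsLocalHom f] {A : Matrix ι ι R}
    (hA : IsUnit (f.mapMatrix A)) : IsUnit A := by
  rw [Matrix.isUnit_iff_isUnit_det] at hA ⊢
  exact IsUnit.of_map f _ (by rwa [RingHom.map_det])

theorem Matrix.linearIndependent_rows_of_isUnit_submatrix {ι m : Type*} [Fintype ι]
    [DecidableEq ι] {M : Matrix ι m K} {σ : ι → m} (h : IsUnit (M.submatrix id σ)) :
    LinearIndependent K M.row :=
  LinearIndependent.of_comp (LinearMap.funLeft K K σ)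
    (Matrix.linearIndependent_rows_iff_isUnit.2 h)

theorem Submodule.vecMul_mem {ι m : Type*} [Fintype ι] {W : Submodule K (m → K)}
    {U : Matrix ι m K} (hU : ∀ i, U i ∈ W) (x : ι → K) : Matrix.vecMul x U ∈ W := by
  rw [Matrix.vecMul_eq_sum]
  exact Submodule.sum_mem _ fun i _ => Submodule.smul_mem _ _ (hU i)

theorem Submodule.span_range_eq_of_linearIndependent {ι V : Type*} [Fintype ι]
    [AddCommGroup V] [Module K V] {W : Submodule K V} [FiniteDimensional K W] {w : ι → V}
    (hwW : ∀ i, w i ∈ W) (hw : LinearIndependent K w) (hW : Module.finrank K W = Fintype.card ι) :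
    Submodule.span K (Set.range w) = W :=
  Submodule.eq_of_le_of_finrank_eq (Submodule.span_le.2 (Set.range_subset_iff.2 hwW))
    (by rw [hW, linearIndependent_iff_card_eq_finrank_span.1 hw]; rfl)

namespace Valuation

variable (v : Valuation K Γ)

theorem map_dotProduct_lt_one {ι : Type*} [Fintype ι] {x y : ι → K}
    (hx : ∀ i, v (x i) ≤ 1) (hy : ∀ i, v (y i) < 1) : v (x ⬝ᵥ y) < 1 :=
  v.map_sum_lt one_ne_zero fun i _ =>
    (v.map_mul _ _).trans_lt ((mul_le_of_le_one_left' (hx i)).trans_lt (hy i))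

end Valuation

section Residue

variable (v : Valuation K Γ)

theorem res'_of_le_one {x : K} (hx : v x ≤ 1) :
    res' v x = IsLocalRing.residue v.valuationSubring ⟨x, hx⟩ :=
  dif_pos hx

theorem res'_eq_zero_iff {x : K} (hx : v x ≤ 1) : res' v x = 0 ↔ v x < 1 := by
  rw [res'_of_le_one v hx]
  refine (IsLocalRing.residue_eq_zero_iff _).trans ?_
  rw [IsLocalRing.mem_maximalIdeal, mem_nonunits_iff,
    (Valuation.valuationSubring.integers v).isUnit_iff_valuation_eq_one]
  exact hx.lt_iff_ne.symm

theorem memGLO_of_isUnit_resM {d : ℕ} {A : Matrix (Fin d) (Fin d) K} (hA : EntriesInO v A)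
    (hres : IsUnit (resM v A)) : MemGLO v A := by
  set f := v.valuationSubring.subtype.mapMatrix (m := Fin d)
  set A' : Matrix (Fin d) (Fin d) v.valuationSubring := fun i j => ⟨A i j, hA i j⟩
  have hA' : A = f A' := rfl
  have hres' : resM v A = (IsLocalRing.residue v.valuationSubring).mapMatrix A' := by
    ext i j; exact res'_of_le_one v (hA i j)
  have hdet : IsUnit A'.det :=
    A'.isUnit_iff_isUnit_det.1 (Matrix.isUnit_of_isUnit_mapMatrix _ (hres' ▸ hres))
  refine ⟨hA, f A'⁻¹, ?_, ?_, fun i j => (A'⁻¹ i j).2⟩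
  · rw [hA', ← map_mul, A'.mul_nonsing_inv hdet, map_one]
  · rw [hA', ← map_mul, A'.nonsing_inv_mul hdet, map_one]

theorem lt_one_of_resv_eq_single {n : ℕ} {x : Fin n → K} (hx : ∀ j, v (x j) ≤ 1) {i j : Fin n}
    (hres : resv v x = Pi.single i 1) (hji : j ≠ i) : v (x j) < 1 :=
  (res'_eq_zero_iff v (hx j)).1 <| (congrFun hres j).trans (Pi.single_eq_of_ne hji _)

theorem resM_submatrix_eq_one {n d : ℕ} {u : Fin d → Fin n → K} {σ : Fin d → Fin n}
    (hσ : Function.Injective σ) (hres : ∀ k, resv v (u k) = Pi.single (σ k) 1) :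
    resM v ((Matrix.of u).submatrix id σ) = 1 := by
  ext k l
  change resv v (u k) (σ l) = _
  rw [hres, Pi.single_apply, Matrix.one_apply]
  exact if_congr (hσ.eq_iff.trans eq_comm) rfl rfl

end Residue

/-- a `d`-dimensional subspace `W ⊆ Kⁿ` whose residue is spanned by
the residues of the first `d` standard basis vectors has a basis `(wₖ)` with
`wₖ ∈ eₖ + ({0}^d × 𝔪^{n−d})`. -/
theorem exists_nice_basis
    (v : Valuation K Γ) {n d : ℕ} (hdn : d ≤ n)
    (W : Submodule K (Fin n → K)) (hWd : Module.finrank K W = d)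
    (hres : resSet v (W : Set (Fin n → K)) =
      ↑(Submodule.span (Kbar v)
        (Set.range fun k : Fin d =>
          (Pi.single (Fin.castLE hdn k) 1 : Fin n → Kbar v)))) :
    ∃ w : Fin d → Fin n → K,
      (∀ k, w k ∈ W) ∧ LinearIndependent K w ∧
      Submodule.span K (Set.range w) = W ∧
      ∀ k : Fin d, ∀ j : Fin n,
        ((j : ℕ) < d → w k j = if (j : ℕ) = (k : ℕ) then 1 else 0) ∧
        (d ≤ (j : ℕ) → v (w k j) < 1) := by
  set σ : Fin d → Fin n := Fin.castLE hdn
  have hlift : ∀ k, ∃ x ∈ W, (∀ i, v (x i) ≤ 1) ∧ resv v x = Pi.single (σ k) 1 := fun k => by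
    obtain ⟨x, ⟨hxW, hxO⟩, hx⟩ : (Pi.single (σ k) 1 : Fin n → Kbar v) ∈ resSet v (W : Set _) :=
      hres ▸ Submodule.subset_span ⟨k, rfl⟩
    exact ⟨x, hxW, hxO, hx⟩
  choose u huW huO hures using hlift
  obtain ⟨-, N, -, hNu, hNO⟩ := memGLO_of_isUnit_resM v (A := (Matrix.of u).submatrix id σ)
    (fun k l => huO k (σ l)) (resM_submatrix_eq_one v (Fin.castLE_injective hdn) hures ▸ isUnit_one)
  set w := N * Matrix.of u
  have hw : w.submatrix id σ = 1 := by
    rw [Matrix.submatrix_mul _ _ _ id _ Function.bijective_id, Matrix.submatrix_id_id, hNu]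
  have hwW : ∀ k, w k ∈ W := fun k => Submodule.vecMul_mem huW (N k)
  have hwli : LinearIndependent K w.row :=
    Matrix.linearIndependent_rows_of_isUnit_submatrix (hw ▸ isUnit_one)
  refine ⟨w, hwW, hwli, Submodule.span_range_eq_of_linearIndependent hwW hwli (by simp [hWd]),
    fun k j => ⟨fun hj => ?_, fun hj => v.map_dotProduct_lt_one (hNO k) fun l => ?_⟩⟩
  · simpa [σ, Matrix.one_apply, Fin.ext_iff, eq_comm] using congrFun₂ hw k ⟨j, hj⟩
  · refine lt_one_of_resv_eq_single v (huO l) (hures l) fun h => ?_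
    have := (Fin.ext_iff.1 h).trans (Fin.val_castLE hdn l)
    omega

end
end
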